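/- (Case 2 of the social-cost analysis.) Consider a facility-location instance with |N₁| ≥ |N₂| and |N₁ \ N₂| < |N₁ ∩ N₂|, and let m₁₂ be the median position of N₁ ∩ N₂. Then the solution w = (t(m₁₂), s(m₁₂)) satisfies SC(w) ≤ 11 · SC(y₁,y₂) for every feasible solution (y₁,y₂). -/

import Mathlib

open Finset

/-- The smallest element of `C` minimizing the distance to `p`. -/
noncomputable def tloc (C : Finset ℝ) (p : ℝ) : ℝ :=
  ((C.filter fun c => ∀ c' ∈ C, |p - c| ≤ |p - c'|).min).untopD 0

/-- The smallest element of `C \ {tloc C p}` minimizing the distance to `p`. -/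
noncomputable def sloc (C : Finset ℝ) (p : ℝ) : ℝ :=
  tloc (C.erase (tloc C p)) p

/-- The `⌈n/2⌉`-th smallest element of a multiset of reals (0 if empty). -/
noncomputable def medOf (l : Multiset ℝ) : ℝ :=
  (l.sort (· ≤ ·)).getD ((Multiset.card l + 1) / 2 - 1) 0

/-- The median position of the agents in `S` with positions `x`. -/
noncomputable def medianPos (S : Finset ℕ) (x : ℕ → ℝ) : ℝ :=
  medOf (S.val.map x)

/-- The Conditional-Median mechanism, assuming facility 1 is (weakly) more popular. -/
noncomputable def condMedian (x : ℕ → ℝ) (N1 N2 : Finset ℕ) (C : Finset ℝ) : ℝ × ℝ :=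
  if (N1 ∩ N2).card ≤ (N1 \ N2).card then
    let m1 := medianPos (N1 \ N2) x
    let m2 := medianPos N2 x
    let w1 := tloc C m1
    (w1, if tloc C m2 ≠ w1 then tloc C m2 else sloc C m2)
  else
    let m12 := medianPos (N1 ∩ N2) x
    (tloc C m12, sloc C m12)

/-- The output of the Conditional-Median mechanism (roles swapped if `|N₂| > |N₁|`). -/
noncomputable def mechOutput (x : ℕ → ℝ) (N1 N2 : Finset ℕ) (C : Finset ℝ) : ℝ × ℝ :=
  if N2.card ≤ N1.card then condMedian x N1 N2 C
  else (condMedian x N2 N1 C).swap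

/-- The cost of agent `i` at solution `y`: the distance to the farthest approved facility. -/
noncomputable def cost (x : ℕ → ℝ) (N1 N2 : Finset ℕ) (i : ℕ) (y : ℝ × ℝ) : ℝ :=
  if i ∈ N1 then
    if i ∈ N2 then max |x i - y.1| |x i - y.2| else |x i - y.1|
  else |x i - y.2|

/-- The social cost. -/
noncomputable def SC (x : ℕ → ℝ) (N1 N2 N : Finset ℕ) (y : ℝ × ℝ) : ℝ :=
  ∑ i ∈ N, cost x N1 N2 i y

/-- The max cost. -/
noncomputable def MC (x : ℕ → ℝ) (N1 N2 N : Finset ℕ) (hN : N.Nonempty) (y : ℝ × ℝ) : ℝ :=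
  N.sup' hN fun i => cost x N1 N2 i y

/-!
Let `T = N₁ ∩ N₂`, `m` its median and `A = ∑_{i ∈ T} cost_i(y)`. Since the median minimises
the sum of distances, `∑_{i ∈ T} |x_i - m| ≤ A` and `|T| · |m - y_j| ≤ 2A` for both `j`.
The pair `(t(m), s(m))` is at max-distance from `m` no larger than any feasible pair, so agents
of `T` pay at most `A + 2A` in total. Every other agent's cost moves by at most
`max_j |y_j - w_j| ≤ 4A / |T|`, and the case hypotheses give at most `2|T|` such agents,
adding `8A`. Altogether `SC(w) ≤ SC(y) + 10A ≤ 11 SC(y)`.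
-/

lemma abs_sub_add_abs_sub_le_of_le_of_le {a b m : ℝ} (ham : a ≤ m) (hmb : m ≤ b) (p : ℝ) :
    |a - m| + |b - m| ≤ |a - p| + |b - p| := by
  rw [abs_of_nonpos (sub_nonpos.2 ham), abs_of_nonneg (sub_nonneg.2 hmb)]
  linarith [neg_abs_le (a - p), le_abs_self (b - p)]

/-- Pair each `i` with its mirror `n - 1 - i`: the condition `2k + 1 ≤ n ≤ 2k + 2` puts `k`
between the two. -/
theorem Monotone.sum_abs_sub_le {n : ℕ} {a : Fin n → ℝ} (ha : Monotone a) (k : Fin n)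
    (hk₁ : 2 * (k : ℕ) + 1 ≤ n) (hk₂ : n ≤ 2 * (k : ℕ) + 2) (p : ℝ) :
    ∑ i, |a i - a k| ≤ ∑ i, |a i - p| := by
  have hpair : ∀ i, |a i - a k| + |a i.rev - a k| ≤ |a i - p| + |a i.rev - p| := by
    intro i
    have hrev_val : (i.rev : ℕ) = n - 1 - i := by rw [Fin.val_rev]; omega
    rcases le_or_gt i k with hik | hki
    · have hk_rev : k ≤ i.rev := Fin.le_def.2 (by rw [Fin.le_def] at hik; omega)
      exact abs_sub_add_abs_sub_le_of_le_of_le (ha hik) (ha hk_rev) p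
    · have hrev_k : i.rev ≤ k := Fin.le_def.2 (by rw [Fin.lt_def] at hki; omega)
      linarith [abs_sub_add_abs_sub_le_of_le_of_le (ha hrev_k) (ha hki.le) p]
  have hrev : ∀ f : ℝ → ℝ, ∑ i : Fin n, f (a i.rev) = ∑ i, f (a i) :=
    fun f => Equiv.sum_comp Fin.revPerm (f ∘ a)
  have hsum := sum_le_sum fun i (_ : i ∈ univ) => hpair i
  rw [sum_add_distrib, sum_add_distrib, hrev (|· - a k|), hrev (|· - p|)] at hsum
  linarith

theorem sum_abs_sub_medOf_le (s : Multiset ℝ) (hs : s ≠ 0) (p : ℝ) :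
    (s.map fun a => |a - medOf s|).sum ≤ (s.map fun a => |a - p|).sum := by
  set l := s.sort (· ≤ ·)
  have hl : (l : Multiset ℝ) = s := Multiset.sort_eq _ _
  have hcard : Multiset.card s = l.length := by rw [← hl, Multiset.coe_card]
  have hpos : 0 < l.length := hcard ▸ Multiset.card_pos.2 hs
  set k := (l.length + 1) / 2 - 1
  have hk₁ : 2 * k + 1 ≤ l.length := by omega
  have hk₂ : l.length ≤ 2 * k + 2 := by omega
  have hk : k < l.length := by omega
  have hmed : medOf s = l[k] := by rw [medOf, hcard, List.getD_eq_getElem _ _ hk]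
  rw [hmed, ← hl, Multiset.map_coe, Multiset.map_coe, Multiset.sum_coe, Multiset.sum_coe,
    ← Fin.sum_univ_fun_getElem, ← Fin.sum_univ_fun_getElem]
  exact (List.sortedLE_iff_pairwise.2 (Multiset.pairwise_sort _ _)).monotone_get.sum_abs_sub_le
    ⟨k, hk⟩ hk₁ hk₂ p

theorem sum_abs_sub_medianPos_le (S : Finset ℕ) (x : ℕ → ℝ) (hS : S.Nonempty) (p : ℝ) :
    ∑ i ∈ S, |x i - medianPos S x| ≤ ∑ i ∈ S, |x i - p| := by
  have h := sum_abs_sub_medOf_le (S.val.map x)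
    (by simpa [Multiset.map_eq_zero] using hS.ne_empty) p
  rwa [Multiset.map_map, Multiset.map_map] at h

theorem card_mul_abs_medianPos_sub_le (S : Finset ℕ) (x : ℕ → ℝ) (hS : S.Nonempty) (z : ℝ) :
    S.card * |medianPos S x - z| ≤ 2 * ∑ i ∈ S, |x i - z| := by
  have htri : ∀ i ∈ S, |medianPos S x - z| ≤ |x i - medianPos S x| + |x i - z| :=
    fun i _ => abs_sub_comm (x i) (medianPos S x) ▸ abs_sub_le _ _ _
  have hsum := sum_le_sum htri
  rw [sum_const, nsmul_eq_mul, sum_add_distrib] at hsum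
  linarith [sum_abs_sub_medianPos_le S x hS z]

section Candidates

variable {C : Finset ℝ} {p : ℝ}

lemma tloc_eq_min' (hC : C.Nonempty) :
    ∃ h : (C.filter fun c => ∀ c' ∈ C, |p - c| ≤ |p - c'|).Nonempty,
      tloc C p = (C.filter fun c => ∀ c' ∈ C, |p - c| ≤ |p - c'|).min' h := by
  obtain ⟨c₀, hc₀, hmin⟩ := C.exists_min_image (fun c => |p - c|) hC
  have h : (C.filter fun c => ∀ c' ∈ C, |p - c| ≤ |p - c'|).Nonempty :=
    ⟨c₀, mem_filter.2 ⟨hc₀, hmin⟩⟩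
  exact ⟨h, by rw [tloc, ← coe_min' h, WithTop.untopD_coe]⟩

lemma tloc_mem (hC : C.Nonempty) : tloc C p ∈ C := by
  obtain ⟨h, he⟩ := tloc_eq_min' (p := p) hC
  exact he ▸ (mem_filter.1 (min'_mem _ h)).1

lemma abs_sub_tloc_le {c : ℝ} (hc : c ∈ C) : |p - tloc C p| ≤ |p - c| := by
  obtain ⟨h, he⟩ := tloc_eq_min' (p := p) ⟨c, hc⟩
  exact he ▸ (mem_filter.1 (min'_mem _ h)).2 c hc

lemma sloc_mem (hC : 1 < C.card) : sloc C p ∈ C := by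
  have hE : (C.erase (tloc C p)).Nonempty := by
    rw [← card_pos, card_erase_of_mem (tloc_mem (card_pos.1 (by omega)))]
    omega
  exact mem_of_mem_erase (tloc_mem hE)

lemma abs_sub_sloc_le {c : ℝ} (hc : c ∈ C) (hct : c ≠ tloc C p) :
    |p - sloc C p| ≤ |p - c| :=
  abs_sub_tloc_le (mem_erase.2 ⟨hct, hc⟩)

lemma max_abs_sub_tloc_sloc_le {y₁ y₂ : ℝ} (hy₁ : y₁ ∈ C) (hy₂ : y₂ ∈ C) (hy : y₁ ≠ y₂) :
    max |p - tloc C p| |p - sloc C p| ≤ max |p - y₁| |p - y₂| := by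
  have hs : |p - sloc C p| ≤ max |p - y₁| |p - y₂| := by
    by_cases h : y₁ = tloc C p
    · exact (abs_sub_sloc_le hy₂ (h ▸ hy.symm)).trans (le_max_right _ _)
    · exact (abs_sub_sloc_le hy₁ h).trans (le_max_left _ _)
  have hts : |p - tloc C p| ≤ |p - sloc C p| :=
    abs_sub_tloc_le (sloc_mem (one_lt_card.2 ⟨y₁, hy₁, y₂, hy₂, hy⟩))
  exact max_le (hts.trans hs) hs

end Candidates

section Cost

variable (x : ℕ → ℝ) (N1 N2 : Finset ℕ)

lemma cost_nonneg (i : ℕ) (y : ℝ × ℝ) : 0 ≤ cost x N1 N2 i y := by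
  unfold cost
  split_ifs <;> positivity

lemma abs_sub_fst_le_cost {i : ℕ} (hi : i ∈ N1) (y : ℝ × ℝ) : |x i - y.1| ≤ cost x N1 N2 i y := by
  unfold cost
  split_ifs <;> simp_all

lemma abs_sub_snd_le_cost {i : ℕ} (hi : i ∈ N2) (y : ℝ × ℝ) : |x i - y.2| ≤ cost x N1 N2 i y := by
  unfold cost
  split_ifs <;> simp_all

lemma cost_le_abs_sub_add (i : ℕ) (m : ℝ) (w : ℝ × ℝ) :
    cost x N1 N2 i w ≤ |x i - m| + max |m - w.1| |m - w.2| := by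
  have h₁ := abs_sub_le (x i) m w.1
  have h₂ := abs_sub_le (x i) m w.2
  unfold cost
  split_ifs
  · exact max_le (h₁.trans (by gcongr; exact le_max_left _ _))
      (h₂.trans (by gcongr; exact le_max_right _ _))
  · exact h₁.trans (by gcongr; exact le_max_left _ _)
  · exact h₂.trans (by gcongr; exact le_max_right _ _)

lemma cost_le_cost_add (i : ℕ) (y w : ℝ × ℝ) :
    cost x N1 N2 i w ≤ cost x N1 N2 i y + max |y.1 - w.1| |y.2 - w.2| := by
  have h₁ := abs_sub_le (x i) y.1 w.1
  have h₂ := abs_sub_le (x i) y.2 w.2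
  unfold cost
  split_ifs
  · exact (max_le_max h₁ h₂).trans max_add_add_le_max_add_max
  · exact h₁.trans (by gcongr; exact le_max_left _ _)
  · exact h₂.trans (by gcongr; exact le_max_right _ _)

lemma sum_abs_sub_medianPos_inter_le_sum_cost (hT : (N1 ∩ N2).Nonempty) (y : ℝ × ℝ) :
    ∑ i ∈ N1 ∩ N2, |x i - medianPos (N1 ∩ N2) x| ≤ ∑ i ∈ N1 ∩ N2, cost x N1 N2 i y :=
  (sum_abs_sub_medianPos_le _ x hT y.1).trans
    (sum_le_sum fun _ hi => abs_sub_fst_le_cost x N1 N2 (mem_inter.1 hi).1 y)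

lemma card_mul_max_abs_medianPos_sub_le (hT : (N1 ∩ N2).Nonempty) (y : ℝ × ℝ) :
    (N1 ∩ N2).card * max |medianPos (N1 ∩ N2) x - y.1| |medianPos (N1 ∩ N2) x - y.2| ≤
      2 * ∑ i ∈ N1 ∩ N2, cost x N1 N2 i y := by
  rw [mul_max_of_nonneg _ _ (by positivity)]
  apply max_le
  · calc _ ≤ 2 * ∑ i ∈ N1 ∩ N2, |x i - y.1| := card_mul_abs_medianPos_sub_le _ x hT _
      _ ≤ _ := by gcongr with i hi; exact abs_sub_fst_le_cost x N1 N2 (mem_inter.1 hi).1 y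
  · calc _ ≤ 2 * ∑ i ∈ N1 ∩ N2, |x i - y.2| := card_mul_abs_medianPos_sub_le _ x hT _
      _ ≤ _ := by gcongr with i hi; exact abs_sub_snd_le_cost x N1 N2 (mem_inter.1 hi).2 y

lemma sum_cost_le_sum_abs_sub_add (S : Finset ℕ) (m : ℝ) (w : ℝ × ℝ) :
    ∑ i ∈ S, cost x N1 N2 i w ≤ ∑ i ∈ S, |x i - m| + S.card * max |m - w.1| |m - w.2| := by
  simpa [sum_add_distrib] using sum_le_sum fun i (_ : i ∈ S) => cost_le_abs_sub_add x N1 N2 i m w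

lemma sum_cost_le_sum_cost_add_of_max_abs_sub_le (S : Finset ℕ) {m ρ : ℝ} {y w : ℝ × ℝ}
    (hy : max |m - y.1| |m - y.2| ≤ ρ) (hw : max |m - w.1| |m - w.2| ≤ ρ) :
    ∑ i ∈ S, cost x N1 N2 i w ≤ ∑ i ∈ S, cost x N1 N2 i y + S.card * (2 * ρ) := by
  have hyw : max |y.1 - w.1| |y.2 - w.2| ≤ 2 * ρ := by
    have h₁ := abs_sub_comm y.1 m ▸ abs_sub_le y.1 m w.1
    have h₂ := abs_sub_comm y.2 m ▸ abs_sub_le y.2 m w.2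
    apply max_le <;> linarith [le_max_left |m - y.1| |m - y.2|, le_max_right |m - y.1| |m - y.2|,
      le_max_left |m - w.1| |m - w.2|, le_max_right |m - w.1| |m - w.2|]
  calc ∑ i ∈ S, cost x N1 N2 i w
      ≤ ∑ i ∈ S, (cost x N1 N2 i y + max |y.1 - w.1| |y.2 - w.2|) :=
        sum_le_sum fun i _ => cost_le_cost_add x N1 N2 i y w
    _ ≤ ∑ i ∈ S, cost x N1 N2 i y + S.card * (2 * ρ) := by
        rw [sum_add_distrib, sum_const, nsmul_eq_mul]
        gcongr

end Cost

lemma card_union_sdiff_inter_le {N1 N2 : Finset ℕ} (hcards : N2.card ≤ N1.card)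
    (hcase : (N1 \ N2).card ≤ (N1 ∩ N2).card) :
    ((N1 ∪ N2) \ (N1 ∩ N2)).card ≤ 2 * (N1 ∩ N2).card := by
  have h₁ := card_sdiff_add_card_inter N1 N2
  have h₂ := card_sdiff_add_card_inter N2 N1
  rw [inter_comm N2 N1] at h₂
  rw [card_sdiff_of_subset inter_subset_union]
  have := card_union_add_card_inter N1 N2
  omega

theorem case_two_eleven_approx_general
    (N N1 N2 : Finset ℕ) (x : ℕ → ℝ) (C : Finset ℝ)
    (hU : N1 ∪ N2 = N)
    (hcards : N2.card ≤ N1.card)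
    (hcase : (N1 \ N2).card < (N1 ∩ N2).card)
    (y1 y2 : ℝ) (hy1 : y1 ∈ C) (hy2 : y2 ∈ C) (hy : y1 ≠ y2) :
    SC x N1 N2 N (tloc C (medianPos (N1 ∩ N2) x), sloc C (medianPos (N1 ∩ N2) x)) ≤
      11 * SC x N1 N2 N (y1, y2) := by
  subst hU
  set T := N1 ∩ N2
  set m := medianPos T x
  set w := (tloc C m, sloc C m)
  set ρ := max |m - y1| |m - y2|
  have hT : T.Nonempty := card_pos.1 (by omega)
  have hmed := sum_abs_sub_medianPos_inter_le_sum_cost x N1 N2 hT (y1, y2)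
  have hρ := card_mul_max_abs_medianPos_sub_le x N1 N2 hT (y1, y2)
  have hwρ : max |m - w.1| |m - w.2| ≤ ρ := max_abs_sub_tloc_sloc_le hy1 hy2 hy
  have hcost_T := sum_cost_le_sum_abs_sub_add x N1 N2 T m w
  have hcost_rest := sum_cost_le_sum_cost_add_of_max_abs_sub_le x N1 N2 ((N1 ∪ N2) \ T)
    (y := (y1, y2)) le_rfl hwρ
  have hwρ_T : T.card * max |m - w.1| |m - w.2| ≤ T.card * ρ := by gcongr
  have hcard : ((N1 ∪ N2) \ T).card * ρ ≤ 2 * T.card * ρ := by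
    gcongr
    exact_mod_cast card_union_sdiff_inter_le hcards hcase.le
  have hrest_nonneg : 0 ≤ ∑ i ∈ (N1 ∪ N2) \ T, cost x N1 N2 i (y1, y2) :=
    sum_nonneg fun i _ => cost_nonneg x N1 N2 i _
  rw [SC, SC, ← sum_sdiff inter_subset_union, ← sum_sdiff (inter_subset_union (s := N1))]
  linarith

/-- Case 2 of the social-cost analysis: when `|N₁| ≥ |N₂|` and `|N₁ \ N₂| < |N₁ ∩ N₂|`,
the solution `(t(m₁₂), s(m₁₂))` is 11-approximate for the social cost. -/
theorem case_two_eleven_approx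
    (N N1 N2 : Finset ℕ) (x : ℕ → ℝ) (C : Finset ℝ)
    (hN : N.Nonempty) (h1 : N1.Nonempty) (h2 : N2.Nonempty)
    (hU : N1 ∪ N2 = N) (hC : 2 ≤ C.card)
    (hcards : N2.card ≤ N1.card)
    (hcase : (N1 \ N2).card < (N1 ∩ N2).card)
    (y1 y2 : ℝ) (hy1 : y1 ∈ C) (hy2 : y2 ∈ C) (hy : y1 ≠ y2) :
    SC x N1 N2 N (tloc C (medianPos (N1 ∩ N2) x), sloc C (medianPos (N1 ∩ N2) x)) ≤
      11 * SC x N1 N2 N (y1, y2) :=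
  case_two_eleven_approx_general N N1 N2 x C hU hcards hcase y1 y2 hy1 hy2 hy
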